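/- arXiv:1701.07667 — 11 statements merged into one kernel-verified Lean document; each statement's English description precedes it below -/
import Mathlib

section
/- Let n ≥ 1 and p ∈ [0,1]. If there exists a locally p-biased function f : {-1,1}^n → {-1,1}, then there exist integers b ≥ 0 and k ≥ 0 such that p = b/2^k and 2^k divides n. -/
/-- A point of the Boolean hypercube `{-1,1}^n`, encoded inside `Fin n → ℤ`. -/
def IsPMOne {n : ℕ} (x : Fin n → ℤ) : Prop := ∀ i, x i = 1 ∨ x i = -1

/-- `f` is locally `p`-biased: it takes values in `{-1,1}` on the cube, and for every
vertex `x` of the cube, exactly `p·n` of the `n` neighbors of `x` (points differing from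
`x` in exactly one coordinate) satisfy `f y = 1`. -/
def LocallyBiased (n : ℕ) (p : ℝ) (f : (Fin n → ℤ) → ℤ) : Prop :=
  (∀ x : Fin n → ℤ, IsPMOne x → (f x = 1 ∨ f x = -1)) ∧
  ∀ x : Fin n → ℤ, IsPMOne x →
    ((Finset.univ.filter fun i => f (Function.update x i (-(x i))) = 1).card : ℝ) = p * n

theorem stmt_0 (n : ℕ) (hn : 1 ≤ n) (p : ℝ) (hp0 : 0 ≤ p) (hp1 : p ≤ 1)
    (f : (Fin n → ℤ) → ℤ) (hf : LocallyBiased n p f) :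
    ∃ b k : ℕ, p = (b : ℝ) / 2 ^ k ∧ 2 ^ k ∣ n := by
  classical
  set T : (Fin n → Bool) → (Fin n → ℤ) := fun x i => if x i then 1 else -1 with hTdef
  have hT : ∀ x, IsPMOne (T x) := by
    intro x i
    by_cases h : x i <;> simp [hTdef, h]
  -- flip commutes with T
  have hflip : ∀ (x : Fin n → Bool) (i : Fin n),
      Function.update (T x) i (-(T x i)) = T (Function.update x i (!x i)) := by
    intro x i
    funext j
    by_cases h : j = i
    · subst h
      by_cases hx : x j <;> simp [hTdef, Function.update_self, hx]
    · simp [hTdef, Function.update_of_ne h]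
  -- the flip involution
  have hinv : ∀ i : Fin n, Function.Involutive
      (fun x : Fin n → Bool => Function.update x i (!x i)) := by
    intro i x
    funext j
    by_cases h : j = i
    · subst h; simp
    · simp [Function.update_of_ne h]
  set N : ℕ := (Finset.univ.filter fun x : Fin n → Bool => f (T x) = 1).card with hNdef
  -- double counting
  have hsum : ∑ x : Fin n → Bool,
      ((Finset.univ.filter fun i => f (Function.update (T x) i (-(T x i))) = 1).card)
      = n * N := by
    have h1 : ∀ x : Fin n → Bool,
        ((Finset.univ.filter fun i => f (Function.update (T x) i (-(T x i))) = 1).card)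
        = ∑ i : Fin n, if f (T (Function.update x i (!x i))) = 1 then 1 else 0 := by
      intro x
      rw [Finset.card_filter]
      refine Finset.sum_congr rfl ?_
      intro i _
      rw [hflip x i]
    calc ∑ x : Fin n → Bool,
        ((Finset.univ.filter fun i => f (Function.update (T x) i (-(T x i))) = 1).card)
        = ∑ x : Fin n → Bool, ∑ i : Fin n,
            (if f (T (Function.update x i (!x i))) = 1 then 1 else 0) := by
          exact Finset.sum_congr rfl fun x _ => h1 x
      _ = ∑ i : Fin n, ∑ x : Fin n → Bool,
            (if f (T (Function.update x i (!x i))) = 1 then 1 else 0) :=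
          Finset.sum_comm
      _ = ∑ i : Fin n, ∑ x : Fin n → Bool, (if f (T x) = 1 then 1 else 0) := by
          refine Finset.sum_congr rfl fun i _ => ?_
          exact Fintype.sum_equiv ((hinv i).toPerm _) _ _ (fun x => rfl)
      _ = n * N := by
          rw [Finset.sum_const, Finset.card_univ, Fintype.card_fin, smul_eq_mul,
            hNdef, Finset.card_filter]
  -- real version
  have hcard : Fintype.card (Fin n → Bool) = 2 ^ n := by simp
  have hsumR : ((n : ℝ) * N) = 2 ^ n * (p * n) := by
    have := hf.2
    calc ((n : ℝ) * N) = ((n * N : ℕ) : ℝ) := by push_cast; ring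
      _ = ((∑ x : Fin n → Bool,
          ((Finset.univ.filter fun i =>
            f (Function.update (T x) i (-(T x i))) = 1).card) : ℕ) : ℝ) := by rw [hsum]
      _ = ∑ x : Fin n → Bool,
          (((Finset.univ.filter fun i =>
            f (Function.update (T x) i (-(T x i))) = 1).card : ℝ)) := by push_cast; rfl
      _ = ∑ x : Fin n → Bool, p * n := Finset.sum_congr rfl fun x _ => this (T x) (hT x)
      _ = 2 ^ n * (p * n) := by
          rw [Finset.sum_const, Finset.card_univ, hcard]; push_cast; ring
  have hn0 : (n : ℝ) ≠ 0 := by positivity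
  have hNval : (N : ℝ) = p * 2 ^ n := by
    have : (n : ℝ) * N = (n : ℝ) * (p * 2 ^ n) := by rw [hsumR]; ring
    exact mul_left_cancel₀ hn0 this
  -- value at one point
  set x₀ : Fin n → ℤ := fun _ => 1 with hx₀
  have hx₀pm : IsPMOne x₀ := fun i => Or.inl rfl
  set m : ℕ := (Finset.univ.filter fun i => f (Function.update x₀ i (-(x₀ i))) = 1).card
    with hmdef
  have hm : (m : ℝ) = p * n := hf.2 x₀ hx₀pm
  -- m * 2^n = N * n
  have hkey : m * 2 ^ n = N * n := by
    have : ((m * 2 ^ n : ℕ) : ℝ) = ((N * n : ℕ) : ℝ) := by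
      push_cast
      rw [hm, hNval]; ring
    exact_mod_cast this
  -- 2-adic decomposition of n
  set k : ℕ := n.factorization 2 with hkdef
  set q : ℕ := n / 2 ^ k with hqdef
  have hnne : n ≠ 0 := by omega
  have hq : 2 ^ k * q = n := Nat.ordProj_mul_ordCompl_eq_self n 2
  have hqodd : ¬ 2 ∣ q := Nat.not_dvd_ordCompl Nat.prime_two hnne
  have hqne : q ≠ 0 := by
    intro h
    rw [h, mul_zero] at hq
    exact hnne hq.symm
  have hcop : Nat.Coprime q (2 ^ n) :=
    Nat.Coprime.pow_right n (((Nat.Prime.coprime_iff_not_dvd Nat.prime_two).mpr hqodd).symm)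
  have hqm : q ∣ m := by
    refine Nat.Coprime.dvd_of_dvd_mul_right hcop ?_
    refine ⟨N * 2 ^ k, ?_⟩
    rw [hkey, ← hq]; ring
  obtain ⟨b, hb⟩ := hqm
  refine ⟨b, k, ?_, ⟨q, hq.symm⟩⟩
  -- p = b / 2^k
  have hqR : (q : ℝ) ≠ 0 := by exact_mod_cast hqne
  have h2k : ((2 : ℝ)) ^ k ≠ 0 := by positivity
  have : p * n = (b : ℝ) * q := by
    rw [← hm, hb]; push_cast; ring
  rw [eq_div_iff h2k]
  have hnR : (n : ℝ) = 2 ^ k * q := by exact_mod_cast hq.symm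
  rw [hnR] at this
  have h2 : (p * 2 ^ k) * q = (b : ℝ) * q := by linarith [this]
  exact mul_right_cancel₀ hqR h2
end

section
/- Let n ≥ 1 and let p = b/2^k where b ≥ 0 and k ≥ 0 are integers with b ≤ 2^k and 2^k divides n. Then there exists a locally p-biased function f : {-1,1}^n → {-1,1}. -/
/-!
Label the coordinates by the vectors of `G = (ZMod 2)^k`, each vector used `n / 2^k` times, and
hash a point `x` of the cube to the sum of the labels of the coordinates where `x i = 1`. Flipping
coordinate `i` adds its label to the hash (in characteristic two adding and removing agree), so as
`i` ranges over the coordinates the hashes of the neighbours of `x` cover `G` uniformly,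
`n / 2^k` times each. Declaring `f = 1` exactly on the points whose hash lies in a fixed set of
`b` vectors therefore gives every point exactly `b · n / 2^k = p · n` neighbours with `f = 1`.
-/

open Finset

section Hash

variable {G : Type*} [AddCommGroup G]

def cubeHash {n : ℕ} (c : Fin n → G) (x : Fin n → ℤ) : G :=
  ∑ i, if x i = 1 then c i else 0

theorem cubeHash_update {n : ℕ} (c : Fin n → G) (x : Fin n → ℤ) (i : Fin n) (v : ℤ) :
    cubeHash c (Function.update x i v) =
      cubeHash c x - (if x i = 1 then c i else 0) + (if v = 1 then c i else 0) := by
  have hupd : (fun j => if Function.update x i v j = 1 then c j else 0) =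
      Function.update (fun j => if x j = 1 then c j else 0) i (if v = 1 then c i else 0) :=
    funext fun j => Function.apply_update (fun j t => if t = 1 then c j else 0) x i v j
  rw [cubeHash, cubeHash, hupd, sum_update_of_mem (mem_univ i),
    sum_eq_add_sum_sdiff_singleton_of_mem (mem_univ i)]
  abel

theorem cubeHash_update_neg (h2 : ∀ g : G, g + g = 0) {n : ℕ} (c : Fin n → G)
    (x : Fin n → ℤ) (i : Fin n) (hi : x i = 1 ∨ x i = -1) :
    cubeHash c (Function.update x i (-x i)) = cubeHash c x + c i := by
  rcases hi with hi | hi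
  · rw [cubeHash_update, hi, if_pos rfl, if_neg (by norm_num), add_zero, sub_eq_add_neg,
      neg_eq_of_add_eq_zero_right (h2 (c i))]
  · rw [cubeHash_update, hi, if_neg (by norm_num), if_pos (by norm_num), sub_zero]

end Hash

theorem exists_card_fiber_eq {ι G : Type*} [Fintype ι] [Fintype G] [DecidableEq G] {m : ℕ}
    (h : Fintype.card ι = Fintype.card G * m) :
    ∃ c : ι → G, ∀ g, #{i | c i = g} = m := by
  let e : ι ≃ G × Fin m := Fintype.equivOfCardEq (by simp [h])
  refine ⟨fun i => (e i).1, fun g => ?_⟩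
  rw [card_equiv e (t := {g} ×ˢ univ) fun i => by simp [Prod.ext_iff, eq_comm]]
  simp

theorem card_filter_add_mem {ι G : Type*} [Fintype ι] [AddGroup G] [DecidableEq G]
    {c : ι → G} {m : ℕ} (hc : ∀ g, #{i | c i = g} = m) (h : G) (A : Finset G) :
    #{i | h + c i ∈ A} = #A * m := by
  rw [card_eq_sum_card_fiberwise (f := fun i => h + c i) (t := A) fun i hi => by simpa using hi]
  refine sum_const_nat fun a ha => ?_
  rw [← hc (-h + a)]
  congr 1
  ext i
  simp only [mem_filter, mem_univ, true_and, eq_neg_add_iff_add_eq]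
  exact ⟨And.right, fun hi => ⟨hi ▸ ha, hi⟩⟩

theorem locallyBiased_of_card_fiber_eq {G : Type*} [AddCommGroup G] [DecidableEq G]
    (h2 : ∀ g : G, g + g = 0) {n m : ℕ} {c : Fin n → G} (hc : ∀ g, #{i | c i = g} = m)
    (A : Finset G) {p : ℝ} (hp : p * n = #A * m) :
    LocallyBiased n p fun x => if cubeHash c x ∈ A then 1 else -1 := by
  refine ⟨fun x _ => by dsimp only; split_ifs <;> simp, fun x hx => ?_⟩
  have hflip : ∀ i, cubeHash c (Function.update x i (-x i)) = cubeHash c x + c i :=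
    fun i => cubeHash_update_neg h2 c x i (hx i)
  simp [hflip, card_filter_add_mem hc, hp]

theorem stmt_1_general (n : ℕ) (b k : ℕ) (hb : b ≤ 2 ^ k) (hdvd : 2 ^ k ∣ n) :
    ∃ f : (Fin n → ℤ) → ℤ, LocallyBiased n ((b : ℝ) / 2 ^ k) f := by
  obtain ⟨m, rfl⟩ := hdvd
  have hcard : Fintype.card (Fin k → ZMod 2) = 2 ^ k := by simp
  obtain ⟨c, hc⟩ :=
    exists_card_fiber_eq (ι := Fin (2 ^ k * m)) (G := Fin k → ZMod 2) (m := m)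
      (by simp [hcard])
  obtain ⟨A, -, hA⟩ := exists_subset_card_eq (s := (univ : Finset (Fin k → ZMod 2)))
    (by simpa [hcard] using hb)
  refine ⟨_, locallyBiased_of_card_fiber_eq
    (fun g => funext fun j => CharTwo.add_self_eq_zero (g j)) hc A ?_⟩
  rw [hA]
  push_cast
  field_simp

theorem stmt_1 (n : ℕ) (hn : 1 ≤ n) (b k : ℕ) (hb : b ≤ 2 ^ k) (hdvd : 2 ^ k ∣ n) :
    ∃ f : (Fin n → ℤ) → ℤ, LocallyBiased n ((b : ℝ) / 2 ^ k) f :=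
  stmt_1_general n b k hb hdvd
end

section
/- Let n = 2^k be a power of two. Then there exists a locally (1/n)-biased function on {-1,1}^n, i.e., a function f : {-1,1}^n → {-1,1} such that every point x ∈ {-1,1}^n has exactly one neighbor y with f(y) = 1. -/
namespace Stmt2Aux

def bitv (k : ℕ) (i : ℕ) : Fin k → ZMod 2 := fun j => if Nat.testBit i j then 1 else 0

lemma zmod2_add : ∀ a b : ZMod 2, a + b = 0 ↔ b = a := by decide

lemma zmod2_double : ∀ a : ZMod 2, a + a = 0 := by decide

lemma bitv_bij (k : ℕ) : Function.Bijective (fun i : Fin (2^k) => bitv k i) := by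
  rw [Fintype.bijective_iff_injective_and_card]
  constructor
  · intro i i' h
    apply Fin.ext
    apply Nat.eq_of_testBit_eq
    intro j
    by_cases hj : j < k
    · have := congrFun h ⟨j, hj⟩
      simp only [bitv] at this
      by_cases h1 : Nat.testBit i j <;> by_cases h2 : Nat.testBit i' j <;> simp_all
    · have h1 : Nat.testBit i j = false :=
        Nat.testBit_lt_two_pow (lt_of_lt_of_le i.2 (Nat.pow_le_pow_right (by norm_num) (le_of_not_gt hj)))
      have h2 : Nat.testBit i' j = false :=
        Nat.testBit_lt_two_pow (lt_of_lt_of_le i'.2 (Nat.pow_le_pow_right (by norm_num) (le_of_not_gt hj)))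
      rw [h1, h2]
  · simp [ZMod.card]

end Stmt2Aux

theorem stmt_2 (k n : ℕ) (hn : n = 2 ^ k) :
    ∃ f : (Fin n → ℤ) → ℤ,
      (∀ x : Fin n → ℤ, IsPMOne x → (f x = 1 ∨ f x = -1)) ∧
      ∀ x : Fin n → ℤ, IsPMOne x →
        (Finset.univ.filter fun i => f (Function.update x i (-(x i))) = 1).card = 1 := by
  subst hn
  classical
  set T : (Fin (2^k) → ℤ) → Fin k → ZMod 2 :=
    fun x j => ∑ i, (if x i = -1 then Stmt2Aux.bitv k i j else 0) with hT
  refine ⟨fun x => if (∀ j, T x j = 0) then 1 else -1, ?_, ?_⟩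
  · intro x _
    by_cases h : ∀ j, T x j = 0 <;> simp [h]
  · intro x hx
    -- key: T (update x i (-(x i))) j = T x j + bitv k i j
    have key : ∀ (i : Fin (2^k)) (j : Fin k),
        T (Function.update x i (-(x i))) j = T x j + Stmt2Aux.bitv k i j := by
      intro i j
      simp only [hT]
      rw [← Finset.add_sum_erase _ _ (Finset.mem_univ i),
          ← Finset.add_sum_erase _ _ (Finset.mem_univ i)]
      have hsum : ∑ i' ∈ Finset.univ.erase i,
          (if Function.update x i (-(x i)) i' = -1 then Stmt2Aux.bitv k i' j else 0)
          = ∑ i' ∈ Finset.univ.erase i, (if x i' = -1 then Stmt2Aux.bitv k i' j else 0) := by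
        apply Finset.sum_congr rfl
        intro i' hi'
        rw [Function.update_of_ne (Finset.ne_of_mem_erase hi')]
      rw [hsum, Function.update_self]
      rcases hx i with h1 | h1 <;> rw [h1]
      · rw [if_pos (by norm_num : -(1:ℤ) = -1), if_neg (by norm_num : (1:ℤ) ≠ -1)]
        ring
      · rw [if_neg (by norm_num : -(-1:ℤ) ≠ -1), if_pos rfl, zero_add, add_right_comm,
          Stmt2Aux.zmod2_double, zero_add]
    -- the unique i₀
    obtain ⟨i₀, hi₀⟩ := (Stmt2Aux.bitv_bij k).2 (fun j => T x j)
    rw [Finset.card_eq_one]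
    refine ⟨i₀, ?_⟩
    ext i
    simp only [Finset.mem_filter, Finset.mem_univ, true_and, Finset.mem_singleton]
    have hiff : (if (∀ j, T (Function.update x i (-(x i))) j = 0) then (1:ℤ) else -1) = 1
        ↔ Stmt2Aux.bitv k i = fun j => T x j := by
      constructor
      · intro h
        by_cases hc : ∀ j, T (Function.update x i (-(x i))) j = 0
        · funext j
          have := hc j
          rw [key i j, Stmt2Aux.zmod2_add] at this
          exact this
        · simp [hc] at h
      · intro h
        have hc : ∀ j, T (Function.update x i (-(x i))) j = 0 := by
          intro j
          rw [key i j, Stmt2Aux.zmod2_add]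
          exact congrFun h j
        simp [hc]
    rw [hiff]
    constructor
    · intro h
      exact (Stmt2Aux.bitv_bij k).1 (h.trans hi₀.symm)
    · rintro rfl
      exact hi₀
end

section
/- Let n = 2^k be a power of two and let m ∈ {0, 1, …, n}. Then there exists a locally (m/n)-biased function on {-1,1}^n, i.e., a function f : {-1,1}^n → {-1,1} such that every point x ∈ {-1,1}^n has exactly m neighbors y with f(y) = 1. -/
theorem stmt_3 (k n m : ℕ) (hn : n = 2 ^ k) (hm : m ≤ n) :
    ∃ f : (Fin n → ℤ) → ℤ,
      (∀ x : Fin n → ℤ, IsPMOne x → (f x = 1 ∨ f x = -1)) ∧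
      ∀ x : Fin n → ℤ, IsPMOne x →
        (Finset.univ.filter fun i => f (Function.update x i (-(x i))) = 1).card = m := by
  classical
  have hcard : Fintype.card (Fin k → ZMod 2) = n := by
    simp [hn, Fintype.card_fun]
  obtain ⟨e⟩ : Nonempty (Fin n ≃ (Fin k → ZMod 2)) :=
    ⟨(Fintype.equivFinOfCardEq hcard).symm⟩
  have haddself : ∀ g : Fin k → ZMod 2, g + g = 0 := by
    intro g; funext i
    show g i + g i = 0
    have h2 : (2 : ZMod 2) = 0 := by decide
    rw [← two_mul, h2, zero_mul]
  obtain ⟨S, -, hS⟩ := Finset.exists_subset_card_eq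
    (s := (Finset.univ : Finset (Fin k → ZMod 2))) (n := m)
    (by rw [Finset.card_univ, hcard]; exact hm)
  set φ : (Fin n → ℤ) → (Fin k → ZMod 2) :=
    fun x => ∑ i, (if x i = -1 then e i else 0) with hφ
  refine ⟨fun y => if φ y ∈ S then 1 else -1, ?_, ?_⟩
  · intro x _; by_cases h : φ x ∈ S <;> simp [h]
  · intro x hx
    have key : ∀ i : Fin n, φ (Function.update x i (-(x i))) = φ x + e i := by
      intro i
      have hupd : (fun j => if Function.update x i (-(x i)) j = -1 then e j else 0)
          = Function.update (fun j => if x j = -1 then e j else 0) i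
              (if -(x i) = -1 then e i else 0) := by
        funext j
        rcases eq_or_ne j i with rfl | hj
        · simp
        · simp [Function.update_of_ne hj]
      have h1 : φ (Function.update x i (-(x i)))
          = (if -(x i) = -1 then e i else 0)
            + ∑ j ∈ Finset.univ \ {i}, (if x j = -1 then e j else 0) := by
        rw [hφ]; simp only [hupd]
        exact Finset.sum_update_of_mem (Finset.mem_univ i)
          (fun j => if x j = -1 then e j else 0) (if -(x i) = -1 then e i else 0)
      have h2 : φ x
          = (if x i = -1 then e i else 0)
            + ∑ j ∈ Finset.univ \ {i}, (if x j = -1 then e j else 0) := by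
        exact Finset.sum_eq_add_sum_sdiff_singleton_of_mem (Finset.mem_univ i)
          (fun j => if x j = -1 then e j else 0)
      rcases hx i with hxi | hxi
      · rw [h1, h2, hxi]
        norm_num
        rw [add_comm]
      · rw [h1, h2, hxi]
        norm_num
        rw [add_comm _ (e i), ← add_assoc, haddself, zero_add]
    have hset : (Finset.univ.filter fun i =>
          (if φ (Function.update x i (-(x i))) ∈ S then (1:ℤ) else -1) = 1)
        = Finset.univ.filter (fun i => φ x + e i ∈ S) := by
      ext i
      simp only [Finset.mem_filter, Finset.mem_univ, true_and, key i]
      by_cases h : φ x + e i ∈ S <;> simp [h]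
    rw [hset, ← hS]
    apply Finset.card_bij' (fun i _ => φ x + e i) (fun g _ => e.symm (φ x + g))
    · intro i hi
      exact (Finset.mem_filter.mp hi).2
    · intro g hg
      simp only [Finset.mem_filter, Finset.mem_univ, true_and, Equiv.apply_symm_apply]
      rw [← add_assoc, haddself, zero_add]; exact hg
    · intro i hi
      rw [← add_assoc, haddself, zero_add, Equiv.symm_apply_apply]
    · intro g hg
      rw [Equiv.apply_symm_apply, ← add_assoc, haddself, zero_add]
end

section
/- Let f : {-1,1}^n → {-1,1} be a locally p-biased function and let c ≥ 1 be an integer. Define f' : {-1,1}^{cn} → {-1,1} by f'(x) = f(∏_{j=0}^{c-1} x_{1+jn}, …, ∏_{j=0}^{c-1} x_{n+jn}). Then f' is a locally p-biased function on {-1,1}^{cn}. -/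
/-!
Flipping coordinate `k` of `x` flips exactly one block product of `x`, namely the one with index
`k mod n`, and leaves the others unchanged. Hence the neighbours of `x` on which `f'` equals `1`
are the `c` preimages of each neighbour of the folded point on which `f` equals `1`, so their
number is `c · (p n) = p (c n)`.
-/

open Finset Function

theorem Finset.prod_update_neg {ι M : Type*} [DecidableEq ι] [CommMonoid M] [HasDistribNeg M]
    {s : Finset ι} {i : ι} (hi : i ∈ s) (f : ι → M) :
    ∏ j ∈ s, update f i (-f i) j = -∏ j ∈ s, f j := by
  rw [prod_update_of_mem hi, sdiff_singleton_eq_erase, neg_mul, mul_prod_erase s f hi]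

theorem isPMOne_iff_isUnit {n : ℕ} {x : Fin n → ℤ} : IsPMOne x ↔ ∀ i, IsUnit (x i) := by
  simp only [IsPMOne, Int.isUnit_iff]

section FoldProd

variable {c n : ℕ}

/-- `finProdFinEquiv (j, i)` is the index `i + n j`, so the factors are the paper's `x_{1+i+jn}`
(coordinates here are `0`-indexed). -/
def foldProd (x : Fin (c * n) → ℤ) (i : Fin n) : ℤ :=
  ∏ j : Fin c, x (finProdFinEquiv (j, i))

theorem IsPMOne.foldProd {x : Fin (c * n) → ℤ} (hx : IsPMOne x) : IsPMOne (foldProd x) := by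
  rw [isPMOne_iff_isUnit] at hx ⊢
  exact fun i => IsUnit.prod_univ_iff.mpr fun j => hx _

theorem foldProd_update_neg (x : Fin (c * n) → ℤ) (k : Fin (c * n)) :
    foldProd (update x k (-x k)) = update (foldProd x) k.modNat (-foldProd x k.modNat) := by
  obtain ⟨⟨j₀, i₀⟩, rfl⟩ := finProdFinEquiv.surjective k
  have hmod : (finProdFinEquiv (j₀, i₀)).modNat = i₀ :=
    congrArg Prod.snd (finProdFinEquiv.symm_apply_apply (j₀, i₀))
  rw [hmod]
  funext i
  rcases eq_or_ne i i₀ with rfl | hi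
  · have hcol : Injective fun j : Fin c => finProdFinEquiv (j, i) :=
      finProdFinEquiv.injective.comp (Prod.mk_left_injective i)
    simp only [foldProd, update_self]
    rw [← prod_update_neg (mem_univ j₀)]
    exact prod_congr rfl fun j _ => congrFun (update_comp_eq_of_injective x hcol j₀ _) j
  · rw [update_of_ne hi]
    refine prod_congr rfl fun j _ => update_of_ne ?_ _ _
    exact finProdFinEquiv.injective.ne fun h => hi (congrArg Prod.snd h)

theorem card_filter_modNat (P : Fin n → Prop) [DecidablePred P] :
    #{k : Fin (c * n) | P k.modNat} = c * #{i | P i} := by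
  rw [card_equiv (t := univ ×ˢ ({i | P i} : Finset (Fin n))) finProdFinEquiv.symm (by simp),
    card_product, card_univ, Fintype.card_fin]

theorem LocallyBiased.comp_foldProd {p : ℝ} {f : (Fin n → ℤ) → ℤ} (hf : LocallyBiased n p f) :
    LocallyBiased (c * n) p (f ∘ foldProd) := by
  refine ⟨fun x hx => hf.1 _ hx.foldProd, fun x hx => ?_⟩
  simp only [comp_apply, foldProd_update_neg]
  rw [card_filter_modNat (fun i => f (update (foldProd x) i (-foldProd x i)) = 1), Nat.cast_mul,
    hf.2 _ hx.foldProd]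
  push_cast
  ring

end FoldProd

theorem stmt_5 (n c : ℕ) (p : ℝ)
    (f : (Fin n → ℤ) → ℤ) (hf : LocallyBiased n p f)
    (f' : (Fin (c * n) → ℤ) → ℤ)
    -- `f' x = f (∏_j x_{1+jn}, …, ∏_j x_{n+jn})`
    (hf' : ∀ x : Fin (c * n) → ℤ,
      f' x = f (fun i => ∏ j : Fin c,
        x ⟨i.1 + j.1 * n, by
          calc i.1 + j.1 * n < n + j.1 * n := by omega
            _ = (j.1 + 1) * n := by ring
            _ ≤ c * n := Nat.mul_le_mul j.isLt (le_refl n)⟩)) :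
    LocallyBiased (c * n) p f' := by
  have hf'_eq : f' = f ∘ foldProd := by
    funext x
    refine (hf' x).trans (congrArg f (funext fun i => prod_congr rfl fun j _ => ?_))
    exact congrArg x (Fin.ext (by simp [finProdFinEquiv, mul_comm]))
  exact hf'_eq ▸ hf.comp_foldProd
end

section
/- Let f₁ : {-1,1}^{n₁} → {-1,1} and f₂ : {-1,1}^{n₂} → {-1,1} be locally (1/2)-biased functions, and let n = n₁ + n₂. Then the function f : {-1,1}^n → {-1,1} defined by f(x) = f₁(x₁, …, x_{n₁}) · f₂(x_{n₁+1}, …, x_n) is locally (1/2)-biased. -/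
lemma upd_pm {n : ℕ} {x : Fin n → ℤ} (hx : IsPMOne x) (i : Fin n) :
    IsPMOne (Function.update x i (-(x i))) := by
  intro j
  rcases eq_or_ne j i with rfl | hne
  · rcases hx j with h | h <;> simp [h]
  · rw [Function.update_of_ne hne]; exact hx j

lemma half_count {n : ℕ} {g : (Fin n → ℤ) → ℤ} (hg : LocallyBiased n (1/2) g)
    (x : Fin n → ℤ) (hx : IsPMOne x) (c : ℤ) (hc : c = 1 ∨ c = -1) :
    ((Finset.univ.filter fun i => g (Function.update x i (-(x i))) * c = 1).card : ℝ)
      = (1/2) * n := by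
  classical
  rcases hc with rfl | rfl
  · simpa using hg.2 x hx
  · have hcong : (Finset.univ.filter fun i => g (Function.update x i (-(x i))) * (-1) = 1)
        = Finset.univ.filter fun i => ¬ g (Function.update x i (-(x i))) = 1 := by
      apply Finset.filter_congr
      intro i _
      rcases hg.1 _ (upd_pm hx i) with h | h <;> simp [h]
    have hsum := Finset.card_filter_add_card_filter_not
      (s := (Finset.univ : Finset (Fin n)))
      (p := fun i => g (Function.update x i (-(x i))) = 1)
    rw [Finset.card_univ, Fintype.card_fin] at hsum
    have h2 := hg.2 x hx
    rw [hcong]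
    have : ((Finset.univ.filter fun i => ¬ g (Function.update x i (-(x i))) = 1).card : ℝ)
        + (Finset.univ.filter fun i => g (Function.update x i (-(x i))) = 1).card = n := by
      exact_mod_cast by omega
    rw [h2] at this
    linarith

theorem stmt_6 (n₁ n₂ : ℕ) (hn₁ : 1 ≤ n₁) (hn₂ : 1 ≤ n₂)
    (f₁ : (Fin n₁ → ℤ) → ℤ) (f₂ : (Fin n₂ → ℤ) → ℤ)
    (hf₁ : LocallyBiased n₁ (1 / 2) f₁) (hf₂ : LocallyBiased n₂ (1 / 2) f₂)
    (f : (Fin (n₁ + n₂) → ℤ) → ℤ)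
    -- `f x = f₁(x₁,…,x_{n₁}) · f₂(x_{n₁+1},…,x_n)`
    (hf : ∀ x : Fin (n₁ + n₂) → ℤ,
      f x = f₁ (fun i => x (Fin.castAdd n₂ i)) * f₂ (fun i => x (Fin.natAdd n₁ i))) :
    LocallyBiased (n₁ + n₂) (1 / 2) f := by
  classical
  constructor
  · intro x hx
    rw [hf]
    have hx1 : IsPMOne (fun i => x (Fin.castAdd n₂ i)) := fun i => hx _
    have hx2 : IsPMOne (fun i => x (Fin.natAdd n₁ i)) := fun i => hx _
    rcases hf₁.1 _ hx1 with h | h <;> rcases hf₂.1 _ hx2 with h' | h' <;> simp [h, h']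
  · intro x hx
    set x₁ : Fin n₁ → ℤ := fun i => x (Fin.castAdd n₂ i) with hx₁def
    set x₂ : Fin n₂ → ℤ := fun i => x (Fin.natAdd n₁ i) with hx₂def
    have hx1 : IsPMOne x₁ := fun i => hx _
    have hx2 : IsPMOne x₂ := fun i => hx _
    have hne : ∀ (i : Fin n₁) (j : Fin n₂), Fin.natAdd n₁ j ≠ Fin.castAdd n₂ i := by
      intro i j h
      have := congrArg Fin.val h
      simp [Fin.coe_natAdd, Fin.coe_castAdd] at this
      omega
    have key1 : ∀ i : Fin n₁,
        f (Function.update x (Fin.castAdd n₂ i) (-(x (Fin.castAdd n₂ i)))) =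
        f₁ (Function.update x₁ i (-(x₁ i))) * f₂ x₂ := by
      intro i
      rw [hf]
      congr 1
      · congr 1
        funext j
        rcases eq_or_ne j i with rfl | hne'
        · simp [hx₁def]
        · rw [Function.update_of_ne (fun h => hne' (by
            have := congrArg Fin.val h
            simpa [Fin.coe_castAdd, Fin.ext_iff] using this)),
            Function.update_of_ne hne']
      · congr 1
        funext j
        rw [Function.update_of_ne (hne i j)]
    have key2 : ∀ j : Fin n₂,
        f (Function.update x (Fin.natAdd n₁ j) (-(x (Fin.natAdd n₁ j)))) =
        f₂ (Function.update x₂ j (-(x₂ j))) * f₁ x₁ := by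
      intro j
      rw [hf, mul_comm]
      congr 1
      · congr 1
        funext j'
        rcases eq_or_ne j' j with rfl | hne'
        · simp [hx₂def]
        · rw [Function.update_of_ne (fun h => hne' (by
            have := congrArg Fin.val h
            simpa [Fin.coe_natAdd, Fin.ext_iff] using this)),
            Function.update_of_ne hne']
      · congr 1
        funext i
        rw [Function.update_of_ne (Ne.symm (hne i j))]
    have hsplit : ((Finset.univ.filter fun i =>
          f (Function.update x i (-(x i))) = 1).card : ℕ)
        = (Finset.univ.filter fun i : Fin n₁ =>
            f₁ (Function.update x₁ i (-(x₁ i))) * f₂ x₂ = 1).card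
          + (Finset.univ.filter fun j : Fin n₂ =>
            f₂ (Function.update x₂ j (-(x₂ j))) * f₁ x₁ = 1).card := by
      rw [Finset.card_filter, Finset.card_filter, Finset.card_filter,
        ← Equiv.sum_comp finSumFinEquiv
          (fun i => if f (Function.update x i (-(x i))) = 1 then 1 else 0),
        Fintype.sum_sum_type]
      simp only [finSumFinEquiv_apply_left, finSumFinEquiv_apply_right]
      congr 1
      · exact Finset.sum_congr rfl fun i _ => by simp only [key1]
      · exact Finset.sum_congr rfl fun j _ => by simp only [key2]
    rw [hsplit]
    push_cast
    rw [half_count hf₁ x₁ hx1 _ (hf₂.1 x₂ hx2),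
        half_count hf₂ x₂ hx2 _ (hf₁.1 x₁ hx1)]
    push_cast
    ring
end

section
/- For every integer k ≥ 1, the number of tuples (a₁, …, a_k) of non-negative integers satisfying a₁ + 2a₂ + ⋯ + k·a_k ≤ k is at least the binomial coefficient C(2⌊√k⌋, ⌊√k⌋). -/
/-!
Write `s = ⌊√k⌋`. By stars and bars, `C(2s, s)` counts the tuples `b : Fin s → ℕ` with
`∑ b ≤ s`. Padding such a tuple with zeros gives an admissible tuple of length `k`, since only
weights `i + 1 ≤ s` meet its support, so its weighted sum is at most `s · ∑ b ≤ s² ≤ k`.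
-/

open Finset

/-- Stars and bars: the slack `m - ∑ b` is the extra coordinate. -/
def sumLeEquivSumEq (n m : ℕ) :
    {b : Fin n → ℕ // ∑ i, b i ≤ m} ≃ {P : Fin (n + 1) → ℕ // ∑ i, P i = m} where
  toFun b := ⟨Fin.cons (m - ∑ i, b.1 i) b.1, by rw [Fin.sum_cons]; have := b.2; omega⟩
  invFun P := ⟨Fin.tail P.1, by
    have := P.2
    rw [Fin.sum_univ_succ] at this
    simp only [Fin.tail]
    omega⟩
  left_inv b := by simp
  right_inv P := by
    obtain ⟨P, hP⟩ := P
    have h0 : m - ∑ i, Fin.tail P i = P 0 := by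
      rw [Fin.sum_univ_succ] at hP
      simp only [Fin.tail]
      omega
    simp only [h0, Fin.cons_self_tail]

theorem card_sum_eq_choose (n m : ℕ) :
    Nat.card {P : Fin (n + 1) → ℕ // ∑ i, P i = m} = (n + m).choose m := by
  rw [← Nat.card_congr (Sym.equivNatSumOfFintype (Fin (n + 1)) m), Sym.natCard_sym_eq_choose,
    Nat.card_eq_fintype_card, Fintype.card_fin, Nat.add_right_comm, Nat.add_sub_cancel]

theorem ncard_setOf_sum_le_eq_choose (n m : ℕ) :
    {b : Fin n → ℕ | ∑ i, b i ≤ m}.ncard = (n + m).choose m := by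
  rw [← Nat.card_coe_set_eq, ← card_sum_eq_choose]
  exact Nat.card_congr (sumLeEquivSumEq n m)

theorem finite_setOf_weighted_sum_le {ι : Type*} [Fintype ι] (w : ι → ℕ)
    (hw : ∀ i, 0 < w i) (k : ℕ) : {a : ι → ℕ | ∑ i, w i * a i ≤ k}.Finite := by
  refine (Set.Finite.pi fun _ => Set.finite_Iic k).subset fun a ha i _ => ?_
  calc a i ≤ w i * a i := Nat.le_mul_of_pos_left _ (hw i)
    _ ≤ ∑ j, w j * a j :=
      single_le_sum (f := fun j => w j * a j) (fun j _ => Nat.zero_le _) (mem_univ i)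
    _ ≤ k := ha

theorem ncard_setOf_sum_le_le_ncard_weighted {n m k : ℕ} (hn : n ≤ k) (hnm : n * m ≤ k) :
    {b : Fin n → ℕ | ∑ i, b i ≤ m}.ncard ≤
      {a : Fin k → ℕ | ∑ i : Fin k, (i.1 + 1) * a i ≤ k}.ncard := by
  obtain ⟨t, rfl⟩ := Nat.exists_eq_add_of_le hn
  refine Set.ncard_le_ncard_of_injOn (fun b => Fin.append b 0) (fun b hb => ?_)
    (fun b _ b' _ h => ?_) (finite_setOf_weighted_sum_le _ (fun _ => Nat.succ_pos _) _)
  · have hb : ∑ i, b i ≤ m := hb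
    calc ∑ i : Fin (n + t), (i.1 + 1) * Fin.append b 0 i
        = ∑ i : Fin n, (i.1 + 1) * b i := by simp [Fin.sum_univ_add]
      _ ≤ ∑ i : Fin n, n * b i := sum_le_sum fun i _ => Nat.mul_le_mul_right _ i.2
      _ = n * ∑ i, b i := (mul_sum _ _ _).symm
      _ ≤ n * m := Nat.mul_le_mul_left _ hb
      _ ≤ n + t := hnm
  · funext i
    simpa using congrFun h (Fin.castAdd t i)

theorem stmt_8_general (k : ℕ) :
    Nat.choose (2 * Nat.sqrt k) (Nat.sqrt k) ≤
      Set.ncard {a : Fin k → ℕ | ∑ i : Fin k, (i.1 + 1) * a i ≤ k} := by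
  rw [two_mul, ← ncard_setOf_sum_le_eq_choose]
  exact ncard_setOf_sum_le_le_ncard_weighted (Nat.sqrt_le_self k) (Nat.sqrt_le k)

theorem stmt_8 (k : ℕ) (hk : 1 ≤ k) :
    Nat.choose (2 * Nat.sqrt k) (Nat.sqrt k) ≤
      Set.ncard {a : Fin k → ℕ | ∑ i : Fin k, (i.1 + 1) * a i ≤ k} :=
  stmt_8_general k
end

section
/- Let n be a positive even integer and let f : {-1,1}^n → {-1,1} be a locally (1/2)-biased function. Then the Fourier weight of f at degree n/2 equals 1; that is, ∑_{S ⊆ {1,…,n}, |S| = n/2} f̂(S)² = 1, where f̂(S) = 2^{-n} ∑_{x ∈ {-1,1}^n} f(x) ∏_{i ∈ S} x_i. -/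
/-- The Fourier coefficient `f̂(S) = 2⁻ⁿ ∑_{x ∈ {-1,1}ⁿ} f(x) ∏_{i ∈ S} x_i`, where the cube
is enumerated by `b : Fin n → Bool` via `b i ↦ ±1`. -/
noncomputable def hcFourierCoeff (n : ℕ) (f : (Fin n → ℤ) → ℤ) (S : Finset (Fin n)) : ℝ :=
  ((2 : ℝ) ^ n)⁻¹ *
    ((∑ b : Fin n → Bool,
      f (fun i => if b i then 1 else -1) * ∏ i ∈ S, (if b i then (1 : ℤ) else -1) : ℤ) : ℝ)

namespace Stmt10Aux

def eps {n : ℕ} (b : Fin n → Bool) : Fin n → ℤ := fun i => if b i then 1 else -1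

lemma eps_pm {n : ℕ} (b : Fin n → Bool) : IsPMOne (eps b) := by
  intro i; unfold eps; by_cases h : b i <;> simp [h]

def bflip {n : ℕ} (i : Fin n) (b : Fin n → Bool) : Fin n → Bool :=
  Function.update b i (!(b i))

lemma bflip_invol {n : ℕ} (i : Fin n) : Function.Involutive (bflip i) := by
  intro b; funext j
  by_cases h : j = i
  · subst h; simp [bflip]
  · simp [bflip, Function.update, h]

lemma eps_bflip {n : ℕ} (i : Fin n) (b : Fin n → Bool) :
    eps (bflip i b) = Function.update (eps b) i (-(eps b i)) := by
  funext j
  by_cases h : j = i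
  · subst h; simp only [bflip, eps, Function.update_self]
    cases hb : b j <;> simp [hb]
  · simp [bflip, eps, Function.update, h]

lemma orth {n : ℕ} (b b' : Fin n → Bool) :
    ∑ S : Finset (Fin n), (∏ i ∈ S, eps b i) * (∏ i ∈ S, eps b' i)
      = if b = b' then 2 ^ n else 0 := by
  have h1 : ∀ S : Finset (Fin n), (∏ i ∈ S, eps b i) * (∏ i ∈ S, eps b' i)
      = ∏ i ∈ S, (eps b i * eps b' i) := fun S => (Finset.prod_mul_distrib).symm
  simp_rw [h1]
  have h2 : ∑ S : Finset (Fin n), ∏ i ∈ S, (eps b i * eps b' i)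
      = ∏ i : Fin n, (eps b i * eps b' i + 1) := by
    rw [Finset.prod_add]
    rw [← Finset.powerset_univ]
    apply Finset.sum_congr rfl
    intro t _
    simp
  rw [h2]
  have h3 : ∀ i : Fin n, eps b i * eps b' i + 1 = if b i = b' i then 2 else 0 := by
    intro i
    unfold eps
    by_cases hb : b i <;> by_cases hb' : b' i <;> simp [hb, hb']
  simp_rw [h3]
  by_cases h : b = b'
  · subst h; simp
  · rw [if_neg h]
    obtain ⟨i, hi⟩ : ∃ i, b i ≠ b' i := by
      by_contra hc
      push_neg at hc
      exact h (funext hc)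
    exact Finset.prod_eq_zero (Finset.mem_univ i) (by simp [hi])

lemma parseval {n : ℕ} (F : (Fin n → Bool) → ℤ) :
    ∑ S : Finset (Fin n), (∑ b, F b * ∏ i ∈ S, eps b i) ^ 2
      = 2 ^ n * ∑ b, (F b) ^ 2 := by
  have h1 : ∀ S : Finset (Fin n), (∑ b, F b * ∏ i ∈ S, eps b i) ^ 2
      = ∑ b, ∑ b', (F b * F b') * ((∏ i ∈ S, eps b i) * (∏ i ∈ S, eps b' i)) := by
    intro S
    rw [sq, Finset.sum_mul_sum]
    apply Finset.sum_congr rfl; intro b _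
    apply Finset.sum_congr rfl; intro b' _
    ring
  simp_rw [h1]
  rw [Finset.sum_comm]
  have h2 : ∀ b, ∑ S : Finset (Fin n), ∑ b',
      (F b * F b') * ((∏ i ∈ S, eps b i) * (∏ i ∈ S, eps b' i))
      = 2 ^ n * (F b) ^ 2 := by
    intro b
    rw [Finset.sum_comm]
    have h3 : ∀ b', ∑ S : Finset (Fin n),
        (F b * F b') * ((∏ i ∈ S, eps b i) * (∏ i ∈ S, eps b' i))
        = (F b * F b') * (if b = b' then 2 ^ n else 0) := by
      intro b'
      rw [← Finset.mul_sum, orth]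
    simp_rw [h3, mul_ite, mul_zero]
    rw [Finset.sum_ite_eq Finset.univ b (fun b' => F b * F b' * 2 ^ n)]
    simp only [Finset.mem_univ, if_true]
    ring
  simp_rw [h2]
  rw [← Finset.mul_sum]

lemma chi_bflip {n : ℕ} (S : Finset (Fin n)) (i : Fin n) (b : Fin n → Bool) :
    ∏ j ∈ S, eps (bflip i b) j
      = (if i ∈ S then -1 else 1) * ∏ j ∈ S, eps b j := by
  have hne : ∀ j ∈ S, j ≠ i → eps (bflip i b) j = eps b j := by
    intro j _ hj
    rw [eps_bflip, Function.update_of_ne hj]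
  by_cases hi : i ∈ S
  · rw [if_pos hi, ← Finset.mul_prod_erase S _ hi, ← Finset.mul_prod_erase S (eps b) hi]
    have h1 : eps (bflip i b) i = -(eps b i) := by rw [eps_bflip, Function.update_self]
    rw [h1]
    rw [Finset.prod_congr rfl (fun j hj => hne j (Finset.mem_of_mem_erase hj)
      (Finset.ne_of_mem_erase hj))]
    ring
  · rw [if_neg hi, one_mul]
    exact Finset.prod_congr rfl (fun j hj => hne j hj (fun h => hi (h ▸ hj)))

lemma neighbor_sum {n : ℕ} (f : (Fin n → ℤ) → ℤ) (hf : LocallyBiased n (1 / 2) f)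
    (b : Fin n → Bool) : ∑ i : Fin n, f (eps (bflip i b)) = 0 := by
  obtain ⟨hpm, hcard⟩ := hf
  have hc := hcard (eps b) (eps_pm b)
  set T : Finset (Fin n) :=
    Finset.univ.filter fun i => f (Function.update (eps b) i (-(eps b i))) = 1 with hT
  have hcn : (2 * T.card : ℤ) = n := by
    have h1 : (T.card : ℝ) = 1 / 2 * n := hc
    have h2 : (2 * T.card : ℝ) = n := by rw [h1]; ring
    exact_mod_cast h2
  have key : ∀ i : Fin n, f (eps (bflip i b)) = if i ∈ T then 1 else -1 := by
    intro i
    have hval := hpm (eps (bflip i b)) (eps_pm _)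
    rw [eps_bflip] at hval ⊢
    by_cases hi : i ∈ T
    · rw [if_pos hi]
      exact (Finset.mem_filter.mp hi).2
    · rw [if_neg hi]
      rcases hval with h | h
      · exact absurd (Finset.mem_filter.mpr ⟨Finset.mem_univ i, h⟩) hi
      · exact h
  simp_rw [key]
  rw [Finset.sum_ite, Finset.sum_const, Finset.sum_const]
  have h1 : (Finset.univ.filter fun i => i ∈ T) = T := by ext i; simp
  have h2 : (Finset.univ.filter fun i => ¬ i ∈ T) = Tᶜ := by ext i; simp
  rw [h1, h2, Finset.card_compl, Fintype.card_fin]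
  have hle : T.card ≤ n := by simpa using T.card_le_univ
  simp only [nsmul_eq_mul, mul_one, mul_neg_one]
  omega

lemma sum_pm_sign {n : ℕ} (S : Finset (Fin n)) :
    ∑ i : Fin n, (if i ∈ S then (-1 : ℤ) else 1) = (n : ℤ) - 2 * S.card := by
  rw [Finset.sum_ite, Finset.sum_const, Finset.sum_const]
  have h1 : (Finset.univ.filter fun i => i ∈ S) = S := by ext i; simp
  have h2 : (Finset.univ.filter fun i => ¬ i ∈ S) = Sᶜ := by ext i; simp
  rw [h1, h2, Finset.card_compl, Fintype.card_fin]
  have hle : S.card ≤ n := by simpa using S.card_le_univ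
  simp only [nsmul_eq_mul, mul_one, mul_neg_one]
  omega

lemma coeff_zero {n : ℕ} (f : (Fin n → ℤ) → ℤ) (hf : LocallyBiased n (1 / 2) f)
    (S : Finset (Fin n)) :
    ((n : ℤ) - 2 * S.card) * (∑ b, f (eps b) * ∏ i ∈ S, eps b i) = 0 := by
  have step : ∀ i : Fin n, ∑ b, (∏ j ∈ S, eps b j) * f (eps (bflip i b))
      = (if i ∈ S then -1 else 1) * ∑ b, f (eps b) * ∏ j ∈ S, eps b j := by
    intro i
    rw [← Equiv.sum_comp ((bflip_invol i).toPerm _)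
      (fun b => (∏ j ∈ S, eps b j) * f (eps (bflip i b)))]
    simp only [Function.Involutive.coe_toPerm]
    have h4 : ∀ b, (∏ j ∈ S, eps (bflip i b) j) * f (eps (bflip i (bflip i b)))
        = (if i ∈ S then -1 else 1) * (f (eps b) * ∏ j ∈ S, eps b j) := by
      intro b
      rw [bflip_invol i b, chi_bflip]
      ring
    simp_rw [h4]
    rw [← Finset.mul_sum]
  have main : ∑ i : Fin n, ∑ b, (∏ j ∈ S, eps b j) * f (eps (bflip i b)) = 0 := by
    rw [Finset.sum_comm]
    have h5 : ∀ b : Fin n → Bool,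
        ∑ i : Fin n, (∏ j ∈ S, eps b j) * f (eps (bflip i b)) = 0 := by
      intro b
      rw [← Finset.mul_sum, neighbor_sum f hf b, mul_zero]
    simp_rw [h5]
    simp
  rw [Finset.sum_congr rfl (fun i _ => step i), ← Finset.sum_mul, sum_pm_sign] at main
  exact main

end Stmt10Aux

open Stmt10Aux in
theorem stmt_10 (n : ℕ) (hn : 0 < n) (hev : Even n)
    (f : (Fin n → ℤ) → ℤ) (hf : LocallyBiased n (1 / 2) f) :
    ∑ S ∈ Finset.univ.filter (fun S : Finset (Fin n) => S.card = n / 2),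
      (hcFourierCoeff n f S) ^ 2 = 1 := by
  classical
  have hW : ∀ S : Finset (Fin n), hcFourierCoeff n f S
      = ((2 : ℝ) ^ n)⁻¹ * ((∑ b, f (eps b) * ∏ i ∈ S, eps b i : ℤ) : ℝ) := fun S => rfl
  have hzero : ∀ S : Finset (Fin n), S.card ≠ n / 2 →
      (∑ b, f (eps b) * ∏ i ∈ S, eps b i : ℤ) = 0 := by
    intro S hS
    have h := Stmt10Aux.coeff_zero f hf S
    have hne : ((n : ℤ) - 2 * S.card) ≠ 0 := by
      obtain ⟨k, hk⟩ := hev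
      subst hk
      have hSc : S.card ≠ k := by omega
      omega
    exact (mul_eq_zero.mp h).resolve_left hne
  have hsub : ∑ S ∈ Finset.univ.filter (fun S : Finset (Fin n) => S.card = n / 2),
      (hcFourierCoeff n f S) ^ 2 = ∑ S : Finset (Fin n), (hcFourierCoeff n f S) ^ 2 := by
    apply Finset.sum_subset (Finset.filter_subset _ _)
    intro S _ hS
    rw [Finset.mem_filter] at hS
    push_neg at hS
    rw [hW, hzero S (hS (Finset.mem_univ S))]
    simp
  rw [hsub]
  have hFsq : ∀ b : Fin n → Bool, (f (eps b)) ^ 2 = 1 := by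
    intro b
    rcases hf.1 (eps b) (eps_pm b) with h | h <;> rw [h] <;> norm_num
  have hpar : (∑ S : Finset (Fin n), (∑ b, f (eps b) * ∏ i ∈ S, eps b i) ^ 2 : ℤ)
      = 2 ^ n * 2 ^ n := by
    have h := Stmt10Aux.parseval (n := n) (fun b => f (eps b))
    simp_rw [hFsq] at h
    simpa [Finset.card_univ] using h
  have h2sum : ∑ S : Finset (Fin n), ((∑ b, f (eps b) * ∏ i ∈ S, eps b i : ℤ) : ℝ) ^ 2
      = (2 : ℝ) ^ n * 2 ^ n := by
    exact_mod_cast hpar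
  simp_rw [hW, mul_pow]
  rw [← Finset.mul_sum, h2sum]
  have h2ne : ((2 : ℝ) ^ n) ≠ 0 := by positivity
  field_simp
end

section
/- Let n ≥ 2 and let f : {-1,1}^n → {-1,1} be locally ((n−1)/n)-stable, i.e., every point x has exactly one neighbor y with f(y) ≠ f(x). Then there exist an index i ∈ {1,…,n} and a sign ε ∈ {-1,1} such that f(x) = ε·x_i for all x ∈ {-1,1}^n. -/
/-- Flip one coordinate of a cube point. -/
def flipPt {n : ℕ} (x : Fin n → ℤ) (i : Fin n) : Fin n → ℤ :=
  Function.update x i (-(x i))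

lemma flipPt_pm {n : ℕ} {x : Fin n → ℤ} (hx : IsPMOne x) (i : Fin n) :
    IsPMOne (flipPt x i) := by
  intro j
  by_cases h : j = i
  · subst h
    simp only [flipPt, Function.update_self]
    rcases hx j with h | h <;> simp [h]
  · simp only [flipPt, Function.update_of_ne h]
    exact hx j

lemma flipPt_flipPt {n : ℕ} (x : Fin n → ℤ) (i : Fin n) :
    flipPt (flipPt x i) i = x := by
  funext j
  by_cases h : j = i
  · subst h; simp [flipPt]
  · simp [flipPt, Function.update_of_ne h]

lemma flipPt_comm {n : ℕ} (x : Fin n → ℤ) {i j : Fin n} (hij : i ≠ j) :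
    flipPt (flipPt x i) j = flipPt (flipPt x j) i := by
  simp only [flipPt, Function.update_of_ne hij.symm, Function.update_of_ne hij]
  exact Function.update_comm hij _ _ x

lemma flipPt_apply_self {n : ℕ} (x : Fin n → ℤ) (i : Fin n) :
    flipPt x i i = -(x i) := by simp [flipPt]

lemma flipPt_apply_ne {n : ℕ} (x : Fin n → ℤ) {i j : Fin n} (h : j ≠ i) :
    flipPt x i j = x j := by simp [flipPt, Function.update_of_ne h]

theorem stmt_12 (n : ℕ) (hn : 2 ≤ n) (f : (Fin n → ℤ) → ℤ)
    (hrange : ∀ x : Fin n → ℤ, IsPMOne x → (f x = 1 ∨ f x = -1))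
    -- `f` is locally `(n-1)/n`-stable: every cube point has exactly one neighbor
    -- on which `f` takes the opposite value
    (hstable : ∀ x : Fin n → ℤ, IsPMOne x →
      (Finset.univ.filter fun i => f (Function.update x i (-(x i))) ≠ f x).card = 1) :
    ∃ (i : Fin n) (ε : ℤ), (ε = 1 ∨ ε = -1) ∧
      ∀ x : Fin n → ℤ, IsPMOne x → f x = ε * x i := by
  classical
  -- if a coordinate is sensitive, it's the unique one
  have key1 : ∀ x : Fin n → ℤ, IsPMOne x → ∀ i : Fin n,
      f (flipPt x i) ≠ f x → ∀ j : Fin n, j ≠ i → f (flipPt x j) = f x := by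
    intro x hx i hi j hj
    by_contra hcon
    obtain ⟨a, ha⟩ := Finset.card_eq_one.mp (hstable x hx)
    have hi' : i ∈ Finset.univ.filter
        fun i => f (Function.update x i (-(x i))) ≠ f x :=
      Finset.mem_filter.mpr ⟨Finset.mem_univ _, hi⟩
    have hj' : j ∈ Finset.univ.filter
        fun i => f (Function.update x i (-(x i))) ≠ f x :=
      Finset.mem_filter.mpr ⟨Finset.mem_univ _, hcon⟩
    rw [ha, Finset.mem_singleton] at hi' hj'
    exact hj (hj'.trans hi'.symm)
  -- opposite value means negation
  have hneg : ∀ x y : Fin n → ℤ, IsPMOne x → IsPMOne y → f y ≠ f x → f y = -(f x) := by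
    intro x y hx hy h
    rcases hrange x hx with h1 | h1 <;> rcases hrange y hy with h2 | h2 <;>
      simp [h1, h2] at h ⊢
  -- the base point: all ones
  have hpm0 : IsPMOne (fun _ : Fin n => (1 : ℤ)) := fun _ => Or.inl rfl
  obtain ⟨i₀, hi₀⟩ := Finset.card_eq_one.mp (hstable _ hpm0)
  have hi₀mem : i₀ ∈ Finset.univ.filter
      fun i => f (Function.update (fun _ : Fin n => (1 : ℤ)) i
        (-((fun _ : Fin n => (1 : ℤ)) i))) ≠ f (fun _ : Fin n => (1 : ℤ)) := by
    rw [hi₀]; exact Finset.mem_singleton_self _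
  have hsens0 : f (flipPt (fun _ : Fin n => (1 : ℤ)) i₀) ≠ f (fun _ : Fin n => (1 : ℤ)) :=
    (Finset.mem_filter.mp hi₀mem).2
  set ε : ℤ := f (fun _ : Fin n => (1 : ℤ)) with hε
  -- the cube point encoded by a finset
  set pt : Finset (Fin n) → (Fin n → ℤ) :=
    fun S j => if j ∈ S then -1 else 1 with hptdef
  have hptpm : ∀ S, IsPMOne (pt S) := by
    intro S j
    simp only [hptdef]
    split <;> simp
  have hptinsert : ∀ (S : Finset (Fin n)) (a : Fin n), a ∉ S →
      pt (insert a S) = flipPt (pt S) a := by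
    intro S a haS
    funext j
    by_cases h : j = a
    · subst h
      simp [hptdef, flipPt, haS]
    · simp [hptdef, flipPt, Function.update_of_ne h, h]
  -- main induction: sensitivity is always at i₀ and f is dictated by i₀
  have main : ∀ S : Finset (Fin n),
      f (flipPt (pt S) i₀) ≠ f (pt S) ∧ f (pt S) = ε * (pt S) i₀ := by
    intro S
    induction S using Finset.induction_on with
    | empty =>
      constructor
      · have : pt ∅ = fun _ : Fin n => (1 : ℤ) := by
          funext j; simp [hptdef]
        rw [this]; exact hsens0
      · have h1 : pt ∅ i₀ = 1 := by simp [hptdef]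
        have h0 : pt ∅ = fun _ : Fin n => (1 : ℤ) := by
          funext j; simp [hptdef]
        rw [h1, h0, mul_one]
    | @insert a S haS ih =>
      obtain ⟨ihs, ihv⟩ := ih
      rw [hptinsert S a haS]
      set x := pt S with hx
      have hxpm : IsPMOne x := hptpm S
      by_cases hai : a = i₀
      · subst hai
        constructor
        · rw [flipPt_flipPt]
          exact fun h => ihs h.symm
        · have h1 : f (flipPt x a) = -(f x) :=
            hneg x (flipPt x a) hxpm (flipPt_pm hxpm a) ihs
          rw [h1, ihv, flipPt_apply_self]
          ring
      · have hval : f (flipPt x a) = f x := key1 x hxpm i₀ ihs a hai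
        constructor
        · -- the 2-face argument
          have hx' : IsPMOne (flipPt x i₀) := flipPt_pm hxpm i₀
          have hsens' : f (flipPt (flipPt x i₀) i₀) ≠ f (flipPt x i₀) := by
            rw [flipPt_flipPt]
            exact fun h => ihs h.symm
          have h2 : f (flipPt (flipPt x i₀) a) = f (flipPt x i₀) :=
            key1 _ hx' i₀ hsens' a hai
          rw [flipPt_comm x hai, h2, hval]
          exact ihs
        · have h3 : flipPt x a i₀ = x i₀ := flipPt_apply_ne x (Ne.symm hai)
          rw [hval, h3, ihv]
  -- conclude
  refine ⟨i₀, ε, hrange _ hpm0, ?_⟩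
  intro x hx
  have hxeq : x = pt (Finset.univ.filter fun j => x j = -1) := by
    funext j
    simp only [hptdef, Finset.mem_filter, Finset.mem_univ, true_and]
    rcases hx j with h | h <;> simp [h]
  rw [hxeq]
  exact (main _).2
end

section
/- Let n ≥ 2 and let f : {-1,1}^n → {-1,1} be locally (1/n)-stable, i.e., every point x has exactly one neighbor y with f(y) = f(x). Then there exist an index i ∈ {1,…,n} and a sign ε ∈ {-1,1} such that f(x) = ε·∏_{j ≠ i} x_j for all x ∈ {-1,1}^n; that is, f is the parity function on n − 1 variables up to isomorphism. -/
namespace Hypercube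

open Finset

variable {n : ℕ}

def flipCoord (i : Fin n) (x : Fin n → ℤ) : Fin n → ℤ := Function.update x i (-(x i))

lemma flipCoord_apply (i : Fin n) (x : Fin n → ℤ) (j : Fin n) :
    flipCoord i x j = if j = i then -(x i) else x j := by
  simp [flipCoord, Function.update_apply]

@[simp]
lemma flipCoord_flipCoord (i : Fin n) (x : Fin n → ℤ) : flipCoord i (flipCoord i x) = x := by
  funext j
  by_cases h : j = i <;> simp [flipCoord_apply, h]

lemma flipCoord_comm {i l : Fin n} (h : i ≠ l) (x : Fin n → ℤ) :
    flipCoord i (flipCoord l x) = flipCoord l (flipCoord i x) := by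
  funext j
  by_cases hi : j = i <;> by_cases hl : j = l <;> simp_all [flipCoord_apply, h.symm]

lemma isPMOne_one : IsPMOne (1 : Fin n → ℤ) := fun _ => Or.inl rfl

lemma isPMOne_flipCoord {x : Fin n → ℤ} (hx : IsPMOne x) (i : Fin n) :
    IsPMOne (flipCoord i x) := by
  intro j
  rw [flipCoord_apply]
  split_ifs
  · rcases hx i with h | h <;> simp [h]
  · exact hx j

lemma prod_flipCoord_of_mem {s : Finset (Fin n)} {l : Fin n} (hl : l ∈ s) (x : Fin n → ℤ) :
    ∏ j ∈ s, flipCoord l x j = -∏ j ∈ s, x j := by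
  rw [flipCoord, prod_update_of_mem hl, ← mul_prod_erase s x hl, erase_eq]
  ring

lemma prod_flipCoord_of_notMem {s : Finset (Fin n)} {l : Fin n} (hl : l ∉ s) (x : Fin n → ℤ) :
    ∏ j ∈ s, flipCoord l x j = ∏ j ∈ s, x j :=
  prod_update_of_notMem hl _ _

theorem isPMOne_induction {P : (Fin n → ℤ) → Prop} (hone : P 1)
    (hflip : ∀ x, IsPMOne x → P x → ∀ l, P (flipCoord l x)) :
    ∀ x, IsPMOne x → P x := by
  let signs : Finset (Fin n) → Fin n → ℤ := fun s j => if j ∈ s then -1 else 1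
  have signs_isPMOne (s : Finset (Fin n)) : IsPMOne (signs s) := fun j => by
    by_cases h : j ∈ s <;> simp [signs, h]
  have signs_insert {a : Fin n} {s : Finset (Fin n)} (ha : a ∉ s) :
      signs (insert a s) = flipCoord a (signs s) := by
    funext j
    by_cases h : j = a
    · subst h; simp [signs, flipCoord_apply, ha]
    · simp [signs, flipCoord_apply, h]
  have P_signs (s : Finset (Fin n)) : P (signs s) := by
    induction s using Finset.induction_on with
    | empty => exact hone
    | insert a s ha ih => rw [signs_insert ha]; exact hflip _ (signs_isPMOne s) ih a
  intro x hx
  convert P_signs {j | x j = -1} using 1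
  funext j
  rcases hx j with h | h <;> simp [signs, h]

section Stability

variable {f : (Fin n → ℤ) → ℤ}

lemma existsUnique_stable_of_card_eq_one {x : Fin n → ℤ}
    (h : (univ.filter fun i => f (flipCoord i x) = f x).card = 1) :
    ∃! i, f (flipCoord i x) = f x := by
  simpa [card_eq_one_iff_existsUnique] using h

lemma apply_flipCoord_eq_neg (hrange : ∀ x : Fin n → ℤ, IsPMOne x → (f x = 1 ∨ f x = -1))
    {x : Fin n → ℤ} (hx : IsPMOne x) {l : Fin n} (h : f (flipCoord l x) ≠ f x) :
    f (flipCoord l x) = -f x := by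
  rcases hrange x hx with h1 | h1 <;>
    rcases hrange _ (isPMOne_flipCoord hx l) with h2 | h2 <;> omega

theorem stable_flipCoord (hrange : ∀ x : Fin n → ℤ, IsPMOne x → (f x = 1 ∨ f x = -1))
    (hstable : ∀ x : Fin n → ℤ, IsPMOne x → ∃! i, f (flipCoord i x) = f x)
    {x : Fin n → ℤ} (hx : IsPMOne x) {g : Fin n} (hg : f (flipCoord g x) = f x) (l : Fin n) :
    f (flipCoord g (flipCoord l x)) = f (flipCoord l x) := by
  rcases eq_or_ne l g with rfl | hlg
  · simpa using hg.symm
  by_contra hne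
  have hl : f (flipCoord l x) = -f x :=
    apply_flipCoord_eq_neg hrange hx fun h => hlg ((hstable x hx).unique h hg)
  have hgl : f (flipCoord g (flipCoord l x)) = -f (flipCoord l x) :=
    apply_flipCoord_eq_neg hrange (isPMOne_flipCoord hx l) hne
  have hl_at_gx : f (flipCoord l (flipCoord g x)) = f (flipCoord g x) := by
    rw [← flipCoord_comm hlg.symm, hgl, hl, hg, neg_neg]
  have hg_at_gx : f (flipCoord g (flipCoord g x)) = f (flipCoord g x) := by
    rw [flipCoord_flipCoord, hg]
  exact hlg ((hstable _ (isPMOne_flipCoord hx g)).unique hl_at_gx hg_at_gx)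

end Stability

end Hypercube

open Hypercube in
theorem stmt_13_general (n : ℕ) (f : (Fin n → ℤ) → ℤ)
    (hrange : ∀ x : Fin n → ℤ, IsPMOne x → (f x = 1 ∨ f x = -1))
    -- `f` is locally `1/n`-stable: every cube point has exactly one neighbor
    -- on which `f` takes the same value
    (hstable : ∀ x : Fin n → ℤ, IsPMOne x →
      (Finset.univ.filter fun i => f (Function.update x i (-(x i))) = f x).card = 1) :
    ∃ (i : Fin n) (ε : ℤ), (ε = 1 ∨ ε = -1) ∧
      ∀ x : Fin n → ℤ, IsPMOne x → f x = ε * ∏ j ∈ Finset.univ.erase i, x j := by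
  have hunique x (hx : IsPMOne x) := existsUnique_stable_of_card_eq_one (hstable x hx)
  obtain ⟨i, hi, -⟩ := hunique 1 isPMOne_one
  have hi_stable : ∀ x, IsPMOne x → f (flipCoord i x) = f x :=
    isPMOne_induction hi fun x hx hix l => stable_flipCoord hrange hunique hx hix l
  refine ⟨i, f 1, hrange 1 isPMOne_one, isPMOne_induction (by simp) ?_⟩
  intro x hx hfx l
  rcases eq_or_ne l i with rfl | hli
  · rw [hi_stable x hx, prod_flipCoord_of_notMem (Finset.notMem_erase l _), hfx]
  · have hl : f (flipCoord l x) ≠ f x := fun h => hli ((hunique x hx).unique h (hi_stable x hx))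
    rw [apply_flipCoord_eq_neg hrange hx hl, hfx,
      prod_flipCoord_of_mem (Finset.mem_erase.mpr ⟨hli, Finset.mem_univ l⟩)]
    ring

theorem stmt_13 (n : ℕ) (hn : 2 ≤ n) (f : (Fin n → ℤ) → ℤ)
    (hrange : ∀ x : Fin n → ℤ, IsPMOne x → (f x = 1 ∨ f x = -1))
    -- `f` is locally `1/n`-stable: every cube point has exactly one neighbor
    -- on which `f` takes the same value
    (hstable : ∀ x : Fin n → ℤ, IsPMOne x →
      (Finset.univ.filter fun i => f (Function.update x i (-(x i))) = f x).card = 1) :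
    ∃ (i : Fin n) (ε : ℤ), (ε = 1 ∨ ε = -1) ∧
      ∀ x : Fin n → ℤ, IsPMOne x → f x = ε * ∏ j ∈ Finset.univ.erase i, x j :=
  stmt_13_general n f hrange hstable
end

section
/- Let a > 1 and b > 1 be integers, and define f : ℤ → {-1,1} by f(x) = 1 if 0 ≤ (x mod 2(a+b)) < a + b, and f(x) = −1 otherwise. Then f is locally (1/2)-biased on the Cayley graph of ℤ with generators a and b: for every x ∈ ℤ, f(x+a) + f(x−a) + f(x+b) + f(x−b) = 0, i.e., exactly two of the four neighbors of x carry the value 1. -/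
theorem stmt_18 (a b : ℤ) (ha : 1 < a) (hb : 1 < b) (f : ℤ → ℤ)
    -- `f x = 1` if `0 ≤ (x mod 2(a+b)) < a+b`, and `f x = -1` otherwise
    (hf : ∀ x : ℤ,
      f x = if 0 ≤ x % (2 * (a + b)) ∧ x % (2 * (a + b)) < a + b then 1 else -1) :
    ∀ x : ℤ, f (x + a) + f (x - a) + f (x + b) + f (x - b) = 0 := by
  set c := a + b with hc
  set m := 2 * (a + b) with hm
  have hmpos : 0 < m := by omega
  -- key: shifting by c flips f
  have key : ∀ y : ℤ, f (y + c) = - f y := by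
    intro y
    have h0 : 0 ≤ y % m := Int.emod_nonneg y (by omega)
    have h1 : y % m < m := Int.emod_lt_of_pos y hmpos
    have hmod : (y + c) % m = (y % m + c) % m := by
      conv_lhs => rw [← Int.mul_ediv_add_emod y m]
      rw [show m * (y / m) + y % m + c = y % m + c + m * (y / m) by ring]
      simp [Int.add_mul_emod_self_left]
    rw [hf, hf, hmod]
    by_cases hcase : y % m < c
    · have : (y % m + c) % m = y % m + c := Int.emod_eq_of_lt (by omega) (by omega)
      rw [this, if_neg (by omega), if_pos ⟨h0, hcase⟩]
    · have heq : (y % m + c) % m = (y % m + c - m) % m := by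
        rw [show y % m + c - m = y % m + c + m * (-1) by ring, Int.add_mul_emod_self_left]
      have : (y % m + c - m) % m = y % m + c - m := Int.emod_eq_of_lt (by omega) (by omega)
      rw [heq, this, if_pos ⟨by omega, by omega⟩, if_neg (by omega)]; ring
  intro x
  have h1 : f (x + a) = - f (x - b) := by
    have := key (x - b)
    rw [show x - b + c = x + a by omega] at this
    omega
  have h2 : f (x + b) = - f (x - a) := by
    have := key (x - a)
    rw [show x - a + c = x + b by omega] at this
    omega
  omega
end
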